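/- (Barta's inequality.) Let Γ be a countable group acting on the right on a countable set Y, p : Γ → [0,1] a symmetric finitely supported probability measure, and M the associated Markov operator, which restricts to a self-adjoint bounded operator on ℓ²(Y) of norm at most 1. Let λ ∈ [0,1]. If there exists a strictly positive function φ : Y → (0,∞) such that (Mφ)(y) ≤ λ·φ(y) for every y ∈ Y, then the spectral radius of M as an operator on ℓ²(Y) is at most λ. -/

import Mathlib

open Filter Topology Metric Set MeasureTheory Pointwise
open scoped symmDiff ENNReal NNReal

noncomputable section

namespace SPR

variable {X : Type} [MetricSpace X]

/-- The Gromov product of `x` and `y` seen from `z`. -/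
def gromovProd (x y z : X) : ℝ := (dist x z + dist y z - dist x y) / 2

/-- `X` is `δ`-hyperbolic: the four point inequality holds. -/
def GromovHyperbolicWith (δ : ℝ) (X : Type) [MetricSpace X] : Prop :=
  ∀ x y z t : X, min (gromovProd x y t) (gromovProd y z t) - δ ≤ gromovProd x z t

/-- `c` parametrizes a geodesic (by arc length) on the set `I` of times. -/
def IsGeodesicOn (c : ℝ → X) (I : Set ℝ) : Prop :=
  ∀ s ∈ I, ∀ t ∈ I, dist (c s) (c t) = |s - t|

/-- Every pair of points of `X` is joined by a geodesic. -/
def GeodesicSpace (X : Type) [MetricSpace X] : Prop :=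
  ∀ x y : X, ∃ c : ℝ → X,
    c 0 = x ∧ c (dist x y) = y ∧ IsGeodesicOn c (Set.Icc 0 (dist x y))

/-- A geodesic ray, parametrized by `[0,∞)`. -/
def IsGeodesicRay (c : ℝ → X) : Prop := IsGeodesicOn c (Set.Ici 0)

/-- The action of `Γ` on `X` is (metrically) proper. -/
def ProperAction (Γ : Type) (X : Type) [Group Γ] [MetricSpace X] [MulAction Γ X] : Prop :=
  ∀ L : Set X, IsCompact L → {γ : Γ | ∃ x ∈ L, γ • x ∈ L}.Finite

variable {Γ : Type} [Group Γ] [MulAction Γ X]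

/-- The critical exponent (exponential growth rate) of a subset `S` of `Γ`,
for the action on `X` with base point `o`. -/
def critExp (o : X) (S : Set Γ) : ℝ :=
  Filter.limsup
    (fun r : ℝ => Real.log (Nat.card {γ : Γ // γ ∈ S ∧ dist o (γ • o) ≤ r}) / r)
    Filter.atTop

/-- The critical exponent `h_Γ` of the whole group. -/
def fullCritExp (Γ : Type) [Group Γ] [MulAction Γ X] (o : X) : ℝ :=
  critExp o (Set.univ : Set Γ)

/-- The set `Γ_K` of elements `γ ∈ Γ` for which there are `x, y ∈ K` and a geodesic
from `x` to `γ y` meeting `Γ ⬝ K` only inside `K ∪ γ K`. -/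
def gammaK (Γ : Type) [Group Γ] [MulAction Γ X] (K : Set X) : Set Γ :=
  {γ : Γ | ∃ x ∈ K, ∃ y ∈ K, ∃ c : ℝ → X,
    c 0 = x ∧ c (dist x (γ • y)) = γ • y ∧ IsGeodesicOn c (Set.Icc 0 (dist x (γ • y))) ∧
    (c '' Set.Icc 0 (dist x (γ • y))) ∩ (⋃ g : Γ, g • K) ⊆ K ∪ γ • K}

/-- The entropy at infinity `h_Γ^∞`. -/
def entropyAtInfinity (Γ : Type) [Group Γ] [MulAction Γ X] (o : X) : ℝ :=
  sInf {h : ℝ | ∃ K : Set X, IsCompact K ∧ h = critExp o (gammaK Γ K)}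

/-- The action of `Γ` on `X` is strongly positively recurrent (it has a growth gap
at infinity). -/
def SPRAction (Γ : Type) [Group Γ] [MulAction Γ X] (o : X) : Prop :=
  entropyAtInfinity Γ o < fullCritExp Γ o

/-! ### The Gromov boundary -/

theorem gromovProd_ge (x y z w : X) :
    gromovProd x y z - dist z w ≤ gromovProd x y w := by
  have h1 : dist x z ≤ dist x w + dist w z := dist_triangle x w z
  have h2 : dist y z ≤ dist y w + dist w z := dist_triangle y w z
  have h3 : dist w z = dist z w := dist_comm w z
  simp only [gromovProd]
  linarith

/-- A sequence converging to infinity. -/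
def SeqToInf (o : X) (u : ℕ → X) : Prop :=
  Tendsto (fun p : ℕ × ℕ => gromovProd (u p.1) (u p.2) o) atTop atTop

/-- Two sequences converging to infinity define the same boundary point. -/
def seqRel (o : X) (u v : {u : ℕ → X // SeqToInf o u}) : Prop :=
  Tendsto (fun n => gromovProd (u.1 n) (v.1 n) o) atTop atTop

/-- The Gromov boundary of `X` (described with base point `o`). -/
def GromovBoundary (o : X) : Type := Quot (seqRel o)

def mkBoundary (o : X) (u : {u : ℕ → X // SeqToInf o u}) : GromovBoundary o :=
  Quot.mk (seqRel o) u

instance (o : X) : TopologicalSpace (GromovBoundary o) :=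
  inferInstanceAs (TopologicalSpace (Quot (seqRel o)))

instance (o : X) : MeasurableSpace (GromovBoundary o) := borel (GromovBoundary o)

/-- A ray `c` ends at the boundary point `ξ`. -/
def endsAt (o : X) (c : ℝ → X) (ξ : GromovBoundary o) : Prop :=
  ∃ h : SeqToInf o (fun n : ℕ => c n), mkBoundary o ⟨fun n : ℕ => c n, h⟩ = ξ

/-- The bordification `X ∪ ∂X` of `X`. -/
def Bord (o : X) : Type := X ⊕ GromovBoundary o

def Bord.ofX (o : X) (x : X) : Bord o := Sum.inl x

def Bord.ofB (o : X) (ξ : GromovBoundary o) : Bord o := Sum.inr ξ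

/-- Extension of the Gromov product: a point of `X` and a boundary point,
seen from `base`; infimum over representative sequences of the liminf. -/
def gpPB (o base x : X) (ξ : GromovBoundary o) : ℝ :=
  sInf {t : ℝ | ∃ u : {u : ℕ → X // SeqToInf o u}, mkBoundary o u = ξ ∧
    t = Filter.liminf (fun n => gromovProd x (u.1 n) base) Filter.atTop}

/-- Extension of the Gromov product to two boundary points, seen from `base`. -/
def gpBB (o base : X) (ξ η : GromovBoundary o) : EReal :=
  sInf {t : EReal | ∃ u v : {u : ℕ → X // SeqToInf o u},
    mkBoundary o u = ξ ∧ mkBoundary o v = η ∧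
    t = Filter.liminf (fun n => ((gromovProd (u.1 n) (v.1 n) base : ℝ) : EReal)) Filter.atTop}

/-- The Gromov product of two points of the bordification `X ∪ ∂X`, seen from `base`. -/
def gpE (o base : X) (p q : X ⊕ GromovBoundary o) : EReal :=
  match p, q with
  | Sum.inl x, Sum.inl y => ((gromovProd x y base : ℝ) : EReal)
  | Sum.inl x, Sum.inr ξ => ((gpPB o base x ξ : ℝ) : EReal)
  | Sum.inr ξ, Sum.inl x => ((gpPB o base x ξ : ℝ) : EReal)
  | Sum.inr ξ, Sum.inr η => gpBB o base ξ η

/-- The topology of the bordification: generated by the open subsets of `X`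
together with the sets `{p | ⟨p,ξ⟩_o > T}`. -/
instance (o : X) : TopologicalSpace (Bord o) :=
  TopologicalSpace.generateFrom
    ({V : Set (Bord o) | ∃ U : Set X, IsOpen U ∧ V = Bord.ofX o '' U} ∪
     {V : Set (Bord o) | ∃ (ξ : GromovBoundary o) (T : ℝ),
        V = {p : Bord o | (T : EReal) < gpE o o p (Bord.ofB o ξ)}})

/-- `c` together with its interval of definition `I` is a geodesic joining
the point `x ∈ X` to the point `p` of the bordification. -/
def JoinsBord (o : X) (c : ℝ → X) (I : Set ℝ) (x : X) (p : Bord o) : Prop :=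
  (∃ y : X, p = Bord.ofX o y ∧ I = Set.Icc 0 (dist x y) ∧ c 0 = x ∧
    c (dist x y) = y ∧ IsGeodesicOn c I) ∨
  (∃ ξ : GromovBoundary o, p = Bord.ofB o ξ ∧ I = Set.Ici 0 ∧ c 0 = x ∧
    IsGeodesicRay c ∧ endsAt o c ξ)

/-- The shadow `O_o(x,r)`: points of `X ∪ ∂X` joined to `o` by a geodesic
meeting the closed ball `B(x,r)`. -/
def shadow (o x : X) (r : ℝ) : Set (Bord o) :=
  {p | ∃ (c : ℝ → X) (I : Set ℝ), JoinsBord o c I o p ∧ ∃ t ∈ I, c t ∈ Metric.closedBall x r}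

/-- The `K`-radial limit set. -/
def radialLimitSet (o : X) (Γ : Type) [Group Γ] [MulAction Γ X] (K : Set X) :
    Set (GromovBoundary o) :=
  {ξ | ∃ c : ℝ → X, IsGeodesicRay c ∧ endsAt o c ξ ∧
    {γ : Γ | ∃ t : ℝ, 0 ≤ t ∧ c t ∈ γ • K}.Infinite}

/-- The radial limit set. -/
def radialLimitSetFull (o : X) (Γ : Type) [Group Γ] [MulAction Γ X] :
    Set (GromovBoundary o) :=
  {ξ | ∃ K : Set X, IsCompact K ∧ ξ ∈ radialLimitSet o Γ K}

/-- The set `𝓛_K` of endpoints of geodesic rays starting in `K` and meeting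
`Γ ⬝ K` only inside `K`. -/
def LK (o : X) (Γ : Type) [Group Γ] [MulAction Γ X] (K : Set X) :
    Set (GromovBoundary o) :=
  {ξ | ∃ c : ℝ → X, IsGeodesicRay c ∧ c 0 ∈ K ∧ endsAt o c ξ ∧
    (c '' Set.Ici 0) ∩ (⋃ g : Γ, g • K) ⊆ K}

/-- The neighbourhood `U_K^T` of `𝓛_K` in the bordification. -/
def UKT (o : X) (Γ : Type) [Group Γ] [MulAction Γ X] (K : Set X) (T : ℝ) :
    Set (Bord o) :=
  {p | ∃ ξ ∈ LK o Γ K, (T : EReal) ≤ gpE o o p (Bord.ofB o ξ)}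

/-! ### The boundary action -/

section IsometricAction

variable [IsIsometricSMul Γ X]

theorem gromovProd_smul (γ : Γ) (x y o : X) :
    gromovProd (γ • x) (γ • y) o = gromovProd x y (γ⁻¹ • o) := by
  have h1 : dist (γ • x) o = dist x (γ⁻¹ • o) := by
    conv_lhs => rw [← smul_inv_smul γ o]
    exact dist_smul γ x (γ⁻¹ • o)
  have h2 : dist (γ • y) o = dist y (γ⁻¹ • o) := by
    conv_lhs => rw [← smul_inv_smul γ o]
    exact dist_smul γ y (γ⁻¹ • o)
  have h3 : dist (γ • x) (γ • y) = dist x y := dist_smul γ x y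
  simp only [gromovProd, h1, h2, h3]

theorem tendsto_gp_smul {ι : Type} {l : Filter ι} (o : X) (γ : Γ) {u v : ι → X}
    (h : Tendsto (fun n => gromovProd (u n) (v n) o) l atTop) :
    Tendsto (fun n => gromovProd (γ • u n) (γ • v n) o) l atTop := by
  refine tendsto_atTop_mono (fun n => ?_)
    (tendsto_atTop_add_const_right _ (-(dist o (γ⁻¹ • o))) h)
  have h1 := gromovProd_ge (u n) (v n) o (γ⁻¹ • o)
  rw [gromovProd_smul]
  linarith

/-- The action of `Γ` on the Gromov boundary. -/
def boundarySmul (o : X) (γ : Γ) : GromovBoundary o → GromovBoundary o :=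
  Quot.map
    (fun u => ⟨fun n => γ • u.1 n,
      tendsto_gp_smul o γ (u := fun p : ℕ × ℕ => u.1 p.1) (v := fun p : ℕ × ℕ => u.1 p.2) u.2⟩)
    (fun _ _ huv => tendsto_gp_smul o γ huv)

/-- The diagonal action of `γ` on `∂X × ∂X`. -/
def diagSmul (o : X) (γ : Γ) (p : GromovBoundary o × GromovBoundary o) :
    GromovBoundary o × GromovBoundary o :=
  (boundarySmul o γ p.1, boundarySmul o γ p.2)

end IsometricAction

/-! ### Patterson–Sullivan measures -/

/-- A slowly increasing function, in the sense of Patterson. -/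
def SlowlyIncreasing (θ : ℝ → ℝ) : Prop :=
  ∀ ε : ℝ, 0 < ε → ∃ t₀ : ℝ, ∀ t : ℝ, t₀ ≤ t → ∀ u : ℝ, 0 ≤ u →
    θ (t + u) ≤ Real.exp (ε * u) * θ t

/-- The Patterson weight `θ(d(o,γo)) e^{-s d(o,γo)}`. -/
def psWeight (Γ : Type) [Group Γ] [MulAction Γ X] (o : X) (θ : ℝ → ℝ) (s : ℝ)
    (γ : Γ) : ℝ :=
  θ (dist o (γ • o)) * Real.exp (-s * dist o (γ • o))

/-- `ν` is a Patterson–Sullivan measure of `Γ` on the Gromov boundary: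
a probability measure obtained as a weak-* limit, along some sequence `sₙ ↓ h_Γ`,
of the normalized Patterson-weighted orbital measures. -/
def IsPSMeasure (Γ : Type) [Group Γ] [MulAction Γ X] (o : X)
    (ν : Measure (GromovBoundary o)) : Prop :=
  IsProbabilityMeasure ν ∧
  ∃ θ : ℝ → ℝ, (∀ t, 0 < θ t) ∧ Monotone θ ∧ SlowlyIncreasing θ ∧
    (∀ s : ℝ, Summable (psWeight Γ o θ s) ↔ fullCritExp Γ o < s) ∧
    ∃ sq : ℕ → ℝ, (∀ n, fullCritExp Γ o < sq n) ∧
      Tendsto sq atTop (nhds (fullCritExp Γ o)) ∧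
      ∀ f : Bord o → ℝ, Continuous f → (∃ M : ℝ, ∀ p, |f p| ≤ M) →
        Tendsto (fun n =>
            (∑' γ : Γ, psWeight Γ o θ (sq n) γ * f (Bord.ofX o (γ • o))) /
            (∑' γ : Γ, psWeight Γ o θ (sq n) γ)) atTop
          (nhds (∫ ξ, f (Bord.ofB o ξ) ∂ν))

/-! ### The Bowen–Margulis current and the abstract geodesic flow -/

section BowenMargulis

variable [IsIsometricSMul Γ X]

/-- `μ` is a Bowen–Margulis current associated to the Patterson–Sullivan measure `ν`:
a `Γ`-invariant measure on `∂X × ∂X`, vanishing on the diagonal, absolutely continuous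
with respect to `ν ⊗ ν` with density comparable to `e^{2 h_Γ ⟨η,ξ⟩_o}`. -/
def IsBMCurrent (Γ : Type) [Group Γ] [MulAction Γ X] [IsIsometricSMul Γ X] (o : X)
    (ν : Measure (GromovBoundary o))
    (μ : Measure (GromovBoundary o × GromovBoundary o)) : Prop :=
  μ {p | p.1 = p.2} = 0 ∧
  (∀ γ : Γ, Measure.map (diagSmul o γ) μ = μ) ∧
  μ ≪ ν.prod ν ∧
  ∃ C₀ : ℝ, 0 < C₀ ∧
    ∀ᵐ p ∂(ν.prod ν), p.1 ≠ p.2 →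
      C₀⁻¹ * Real.exp (2 * fullCritExp Γ o * (gpBB o o p.1 p.2).toReal)
          ≤ (μ.rnDeriv (ν.prod ν) p).toReal ∧
      (μ.rnDeriv (ν.prod ν) p).toReal
          ≤ C₀ * Real.exp (2 * fullCritExp Γ o * (gpBB o o p.1 p.2).toReal)

/-- The phase space `SX = ∂X × ∂X × ℝ` of the abstract geodesic flow. -/
def SX (o : X) : Type := (GromovBoundary o × GromovBoundary o) × ℝ

instance (o : X) : MeasurableSpace (SX o) :=
  inferInstanceAs (MeasurableSpace ((GromovBoundary o × GromovBoundary o) × ℝ))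

/-- The geodesic flow on `SX`. -/
def flowSX (o : X) (t : ℝ) (v : SX o) : SX o := (v.1, v.2 + t)

/-- The cocycle `β(γ,ξ) = h_Γ⁻¹ log (d(γ⁻¹)_*ν/dν)(ξ)`. -/
def betaCocycle (Γ : Type) [Group Γ] [MulAction Γ X] [IsIsometricSMul Γ X] (o : X)
    (ν : Measure (GromovBoundary o)) (γ : Γ) (ξ : GromovBoundary o) : ℝ :=
  (fullCritExp Γ o)⁻¹ *
    Real.log ((Measure.map (boundarySmul o γ⁻¹) ν).rnDeriv ν ξ).toReal

/-- The (measurable) action of `Γ` on `SX`: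
`γ ⬝ (η,ξ,t) = (γη, γξ, t + κ_γ(η,ξ))`. -/
def smulSX (Γ : Type) [Group Γ] [MulAction Γ X] [IsIsometricSMul Γ X] (o : X)
    (ν : Measure (GromovBoundary o)) (γ : Γ) (v : SX o) : SX o :=
  ((boundarySmul o γ v.1.1, boundarySmul o γ v.1.2),
    v.2 + (betaCocycle Γ o ν γ v.1.2 - betaCocycle Γ o ν γ v.1.1) / 2)

/-- The Bowen–Margulis measure `m = μ ⊗ dt` on `SX`. -/
def bmMeasure (o : X) (μ : Measure (GromovBoundary o × GromovBoundary o)) :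
    Measure (SX o) :=
  μ.prod (volume : Measure ℝ)

/-- `D` is a Borel fundamental domain for the `Γ`-action on `SX`. -/
def IsFundDom (Γ : Type) [Group Γ] [MulAction Γ X] [IsIsometricSMul Γ X] (o : X)
    (ν : Measure (GromovBoundary o)) (μ : Measure (GromovBoundary o × GromovBoundary o))
    (D : Set (SX o)) : Prop :=
  MeasurableSet D ∧ ∀ᵐ v ∂(bmMeasure o μ), ∃! γ : Γ, smulSX Γ o ν γ v ∈ D

/-- A subset of `SX` is `Γ`-invariant up to measure zero. -/
def GammaInvariant (Γ : Type) [Group Γ] [MulAction Γ X] [IsIsometricSMul Γ X] (o : X)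
    (ν : Measure (GromovBoundary o)) (μ : Measure (GromovBoundary o × GromovBoundary o))
    (B : Set (SX o)) : Prop :=
  ∀ γ : Γ, bmMeasure o μ (B ∆ (smulSX Γ o ν γ ⁻¹' B)) = 0

/-- The measure `m̄` of a subset of `SX`, computed via the fundamental domain `D`. -/
def mbar (o : X) (μ : Measure (GromovBoundary o × GromovBoundary o))
    (D B : Set (SX o)) : ℝ≥0∞ :=
  bmMeasure o μ (B ∩ D)

/-- Conservativity of the geodesic flow on `(SX, 𝓑_Γ, m̄)`: almost every point of
a `Γ`-invariant set of positive finite measure returns at unboundedly large times. -/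
def ConservativeFlow (Γ : Type) [Group Γ] [MulAction Γ X] [IsIsometricSMul Γ X] (o : X)
    (ν : Measure (GromovBoundary o)) (μ : Measure (GromovBoundary o × GromovBoundary o))
    (D : Set (SX o)) : Prop :=
  ∀ B : Set (SX o), MeasurableSet B → GammaInvariant Γ o ν μ B →
    0 < mbar o μ D B → mbar o μ D B < ⊤ →
    bmMeasure o μ ((B \ {v | ∀ T : ℝ, ∃ t : ℝ, T ≤ t ∧ flowSX o t v ∈ B}) ∩ D) = 0

/-- Ergodicity of the geodesic flow on `(SX, 𝓑_Γ, m̄)`. -/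
def ErgodicFlow (Γ : Type) [Group Γ] [MulAction Γ X] [IsIsometricSMul Γ X] (o : X)
    (ν : Measure (GromovBoundary o)) (μ : Measure (GromovBoundary o × GromovBoundary o))
    (D : Set (SX o)) : Prop :=
  ∀ B : Set (SX o), MeasurableSet B → GammaInvariant Γ o ν μ B →
    (∀ t : ℝ, bmMeasure o μ (B ∆ (flowSX o t ⁻¹' B)) = 0) →
    mbar o μ D B = 0 ∨ mbar o μ D Bᶜ = 0

/-- Ergodicity of the diagonal `Γ`-action on `(∂²X, μ)`. -/
def ErgodicBoundaryAction (Γ : Type) [Group Γ] [MulAction Γ X] [IsIsometricSMul Γ X] (o : X)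
    (μ : Measure (GromovBoundary o × GromovBoundary o)) : Prop :=
  ∀ A : Set (GromovBoundary o × GromovBoundary o), MeasurableSet A →
    (∀ γ : Γ, μ (A ∆ (diagSmul o γ ⁻¹' A)) = 0) →
    μ A = 0 ∨ μ Aᶜ = 0

/-- The Poincaré series of `Γ` diverges at `s = h_Γ`. -/
def Divergent (Γ : Type) [Group Γ] [MulAction Γ X] (o : X) : Prop :=
  ¬ Summable (fun γ : Γ => Real.exp (-(fullCritExp Γ o) * dist (γ • o) o))

end BowenMargulis

/-! ### Almost invariant vectors, co-amenability, properties (T) and (FM) -/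

/-- The Koopman representation of the `Γ`-action on the countable set `Y`
almost has invariant vectors: for every finite `S ⊆ Γ` and `ε > 0` there is a
nonzero `φ ∈ ℓ²(Y)` with `‖ρ(γ)φ - φ‖ < ε ‖φ‖` for all `γ ∈ S`
(stated with squared `ℓ²` norms). -/
def KoopmanAlmostInvariant (Γ Y : Type) [Group Γ] [MulAction Γ Y] : Prop :=
  ∀ S : Finset Γ, ∀ ε : ℝ, 0 < ε → ∃ φ : Y → ℝ, Memℓp φ 2 ∧ φ ≠ 0 ∧
    ∀ γ ∈ S, ∑' y : Y, (φ (γ⁻¹ • y) - φ y) ^ 2 < ε ^ 2 * ∑' y : Y, (φ y) ^ 2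

/-- `Γ'` is co-amenable in `Γ`: the Koopman representation of `Γ` on `ℓ²` of the
coset space almost has invariant vectors. -/
def CoAmenable (Γ : Type) [Group Γ] (Γ' : Subgroup Γ) : Prop :=
  KoopmanAlmostInvariant Γ (Γ ⧸ Γ')

/-- A unitary representation almost has invariant vectors. -/
def AlmostInvariantVectors {Γ : Type} [Group Γ] {H : Type} [NormedAddCommGroup H]
    [InnerProductSpace ℝ H] (ρ : Γ →* (H ≃ₗᵢ[ℝ] H)) : Prop :=
  ∀ S : Finset Γ, ∀ ε : ℝ, 0 < ε → ∃ φ : H, φ ≠ 0 ∧ ∀ γ ∈ S, ‖ρ γ φ - φ‖ < ε * ‖φ‖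

/-- Kazhdan's property (T): every unitary representation which almost has
invariant vectors has a nonzero invariant vector. -/
def HasPropertyT (Γ : Type) [Group Γ] : Prop :=
  ∀ (H : Type) [NormedAddCommGroup H] [InnerProductSpace ℝ H] [CompleteSpace H],
    ∀ ρ : Γ →* (H ≃ₗᵢ[ℝ] H), AlmostInvariantVectors ρ →
      ∃ φ : H, φ ≠ 0 ∧ ∀ γ : Γ, ρ γ φ = φ

/-- Property (FM): every action of `Γ` on a countable set whose Koopman
representation almost has invariant vectors has a finite orbit. -/
def HasPropertyFM (Γ : Type) [Group Γ] : Prop :=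
  ∀ (Y : Type) [Countable Y], ∀ (_ : MulAction Γ Y),
    KoopmanAlmostInvariant Γ Y → ∃ y : Y, (MulAction.orbit Γ y).Finite

/-! ### Twisted Poincaré series -/

/-- The twisted Poincaré series `A(s) = Σ e^{-s d(γ o, o)} ρ(γ)` is bounded. -/
def TwistedBounded {Γ : Type} [Group Γ] [MulAction Γ X] {H : Type}
    [NormedAddCommGroup H] [InnerProductSpace ℝ H]
    (ρ : Γ →* (H ≃ₗᵢ[ℝ] H)) (o : X) (s : ℝ) : Prop :=
  ∃ M : ℝ, ∀ S : Finset Γ,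
    ‖∑ γ ∈ S, Real.exp (-s * dist (γ • o) o) •
        ((ρ γ).toLinearIsometry.toContinuousLinearMap : H →L[ℝ] H)‖ ≤ M

/-- The critical exponent `h_ρ` of the representation `ρ`. -/
def twistedCritExp {Γ : Type} [Group Γ] [MulAction Γ X] {H : Type}
    [NormedAddCommGroup H] [InnerProductSpace ℝ H]
    (ρ : Γ →* (H ≃ₗᵢ[ℝ] H)) (o : X) : ℝ :=
  sInf {s : ℝ | 0 ≤ s ∧ TwistedBounded ρ o s}

/-! ### Word length and the horocone over a Cayley graph -/

/-- The word length of `γ` with respect to the generating set `S`. -/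
def wordLength {P : Type} [Group P] (S : Set P) (γ : P) : ℕ :=
  sInf {n : ℕ | ∃ l : List P, l.length = n ∧ (∀ x ∈ l, x ∈ S) ∧ l.prod = γ}

/-- `horoBase S γ = (√(|γ|² + 4) - |γ|)/2`, so that the orbital distance on the
horocone over the Cayley graph satisfies `e^{-d(γ o, o)} = (horoBase S γ)²`. -/
def horoBase {P : Type} [Group P] (S : Set P) (γ : P) : ℝ :=
  (Real.sqrt ((wordLength S γ : ℝ) ^ 2 + 4) - (wordLength S γ : ℝ)) / 2

/-! ### The twisted Poincaré series of a Koopman representation -/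

/-- Boundedness of the twisted Poincaré series
`A(s) = Σ_γ e^{-s d(γ o, o)} ρ(γ)` for the Koopman representation of `Γ`
on `ℓ²` of the coset space of `Γ'` (stated with squared `ℓ²` norms). -/
def KoopmanTwistedBounded {X : Type} [MetricSpace X] {Γ : Type} [Group Γ]
    [MulAction Γ X] (o : X) (Γ' : Subgroup Γ) (s : ℝ) : Prop :=
  ∃ M : ℝ, ∀ F : Finset Γ, ∀ φ : Γ ⧸ Γ' → ℝ, Memℓp φ 2 →
    ∑' y : Γ ⧸ Γ', (∑ γ ∈ F, Real.exp (-s * dist (γ • o) o) * φ (γ⁻¹ • y)) ^ 2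
      ≤ M ^ 2 * ∑' y : Γ ⧸ Γ', (φ y) ^ 2

/-- The critical exponent `h_ρ` of the Koopman representation on `ℓ²(Γ'\Γ)`. -/
def koopmanCritExp {X : Type} [MetricSpace X] {Γ : Type} [Group Γ]
    [MulAction Γ X] (o : X) (Γ' : Subgroup Γ) : ℝ :=
  sInf {s : ℝ | 0 ≤ s ∧ KoopmanTwistedBounded o Γ' s}

/-!
Barta's trick: for `ψ ≥ 0`, AM–GM weighted by the positive supersolution `φ` gives
`2 ψ(yγ⁻¹) ψ(y) ≤ ψ(yγ⁻¹)² φ(y)/φ(yγ⁻¹) + ψ(y)² φ(yγ⁻¹)/φ(y)`. As `p` is symmetric, the walk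
is reversible for the counting measure on `Y`, so after summing against `p γ` over `γ` and `y`
both terms contribute the same amount, and the second one sums to
`∑ ψ(y)² (Mφ)(y)/φ(y) ≤ λ ∑ ψ(y)²`. Sums are taken in `ℝ≥0∞`, where every rearrangement is
unconditional; the real inequality follows because `∑ ψ² < ∞`.
-/

theorem two_mul_mul_le_sq_mul_div_add {a b s t : ℝ≥0∞} (hs₀ : s ≠ 0) (hs : s ≠ ∞)
    (ht₀ : t ≠ 0) (ht : t ≠ ∞) : 2 * (a * b) ≤ a ^ 2 * t / s + b ^ 2 * s / t := by
  rcases eq_or_ne a ∞ with rfl | ha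
  · simp [ENNReal.top_mul ht₀, ENNReal.top_div_of_ne_top hs]
  rcases eq_or_ne b ∞ with rfl | hb
  · simp [ENNReal.top_mul hs₀, ENNReal.top_div_of_ne_top ht]
  lift a to ℝ≥0 using ha
  lift b to ℝ≥0 using hb
  lift s to ℝ≥0 using hs
  lift t to ℝ≥0 using ht
  replace hs₀ : s ≠ 0 := by exact_mod_cast hs₀
  replace ht₀ : t ≠ 0 := by exact_mod_cast ht₀
  have key : 2 * (a * b) ≤ a ^ 2 * t / s + b ^ 2 * s / t := by
    rw [← NNReal.coe_le_coe]
    have hs : (0 : ℝ) < s := by positivity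
    have ht : (0 : ℝ) < t := by positivity
    push_cast
    rw [div_add_div _ _ hs.ne' ht.ne', le_div_iff₀ (by positivity)]
    nlinarith [sq_nonneg ((a : ℝ) * t - b * s)]
  have := ENNReal.coe_le_coe.2 key
  push_cast [ENNReal.coe_div hs₀, ENNReal.coe_div ht₀] at this
  exact this

open scoped RightActions

theorem tsum_eq_toReal_tsum_ofReal {α : Type*} {f : α → ℝ} (hf : ∀ a, 0 ≤ f a) :
    ∑' a, f a = (∑' a, ENNReal.ofReal (f a)).toReal := by
  rw [ENNReal.tsum_toReal_eq fun _ => ENNReal.ofReal_ne_top]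
  simp only [ENNReal.toReal_ofReal (hf _)]

theorem _root_.Memℓp.summable_sq {α : Type*} {f : α → ℝ} (hf : Memℓp f 2) :
    Summable fun a => f a ^ 2 := by
  simpa using hf.summable (by norm_num : (0 : ℝ) < (2 : ℝ≥0∞).toReal)

section Barta

variable {Γ Y : Type*} [Group Γ] [MulAction Γᵐᵒᵖ Y]

def markovOp (p : Γ → ℝ≥0∞) (f : Y → ℝ≥0∞) (y : Y) : ℝ≥0∞ :=
  ∑' γ, p γ * f (y <• γ⁻¹)

theorem tsum_tsum_op_smul_inv_flip {p : Γ → ℝ≥0∞} (hp : ∀ γ, p γ⁻¹ = p γ)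
    (f : Y → Y → ℝ≥0∞) :
    ∑' y, ∑' γ, p γ * f (y <• γ⁻¹) y = ∑' y, ∑' γ, p γ * f y (y <• γ⁻¹) := by
  calc ∑' y, ∑' γ, p γ * f (y <• γ⁻¹) y
      = ∑' γ, ∑' y, p γ * f (y <• γ⁻¹) y := ENNReal.tsum_comm
    _ = ∑' γ, ∑' z, p γ * f z (z <• γ) := by
        refine tsum_congr fun γ => ?_
        rw [← (MulAction.toPerm (MulOpposite.op γ) : Equiv.Perm Y).tsum_eq]
        simp
    _ = ∑' γ, ∑' z, p γ * f z (z <• γ⁻¹) := by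
        rw [← (Equiv.inv Γ).tsum_eq]
        simp [hp]
    _ = ∑' y, ∑' γ, p γ * f y (y <• γ⁻¹) := ENNReal.tsum_comm

theorem tsum_markovOp_mul_le {p : Γ → ℝ≥0∞} (hp : ∀ γ, p γ⁻¹ = p γ) {φ ψ : Y → ℝ≥0∞}
    (hφ₀ : ∀ y, φ y ≠ 0) (hφ : ∀ y, φ y ≠ ∞) {lam : ℝ≥0∞}
    (hsuper : ∀ y, markovOp p φ y ≤ lam * φ y) :
    ∑' y, markovOp p ψ y * ψ y ≤ lam * ∑' y, ψ y ^ 2 := by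
  set w : Y → Y → ℝ≥0∞ := fun x y => ψ x ^ 2 * φ y / φ x
  have hw : ∀ y, ∑' γ, p γ * w y (y <• γ⁻¹) ≤ lam * ψ y ^ 2 := fun y =>
    calc ∑' γ, p γ * w y (y <• γ⁻¹) = ψ y ^ 2 / φ y * markovOp p φ y := by
          rw [markovOp, ← ENNReal.tsum_mul_left]
          congr with γ
          simp only [w, div_eq_mul_inv]
          ring
      _ ≤ ψ y ^ 2 / φ y * (lam * φ y) := by gcongr; exact hsuper y
      _ = lam * ψ y ^ 2 := by rw [mul_left_comm, ENNReal.div_mul_cancel (hφ₀ y) (hφ y)]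
  have h2 : 2 * ∑' y, markovOp p ψ y * ψ y ≤ 2 * (lam * ∑' y, ψ y ^ 2) :=
    calc 2 * ∑' y, markovOp p ψ y * ψ y
        = ∑' y, ∑' γ, p γ * (2 * (ψ (y <• γ⁻¹) * ψ y)) := by
          simp only [markovOp, ← ENNReal.tsum_mul_left, ← ENNReal.tsum_mul_right]
          congr with y
          congr with γ
          ring
      _ ≤ ∑' y, ∑' γ, p γ * (w (y <• γ⁻¹) y + w y (y <• γ⁻¹)) := by
          gcongr with y γ
          exact two_mul_mul_le_sq_mul_div_add (hφ₀ _) (hφ _) (hφ₀ _) (hφ _)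
      _ = ∑' y, ∑' γ, p γ * w (y <• γ⁻¹) y + ∑' y, ∑' γ, p γ * w y (y <• γ⁻¹) := by
          simp only [mul_add, ENNReal.tsum_add]
      _ = 2 * ∑' y, ∑' γ, p γ * w y (y <• γ⁻¹) := by rw [tsum_tsum_op_smul_inv_flip hp, two_mul]
      _ ≤ 2 * ∑' y, lam * ψ y ^ 2 := by gcongr with y; exact hw y
      _ = 2 * (lam * ∑' y, ψ y ^ 2) := by rw [ENNReal.tsum_mul_left]
  exact (ENNReal.mul_le_mul_iff_right two_ne_zero ENNReal.ofNat_ne_top).1 h2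

theorem markovOp_ofReal {p : Γ → ℝ} (hp : ∀ γ, 0 ≤ p γ) (hp_fin : (Function.support p).Finite)
    {f : Y → ℝ} (hf : ∀ y, 0 ≤ f y) (y : Y) :
    markovOp (fun γ => ENNReal.ofReal (p γ)) (fun y => ENNReal.ofReal (f y)) y
      = ENNReal.ofReal (∑' γ, p γ * f (y <• γ⁻¹)) := by
  have hsum : Summable fun γ => p γ * f (y <• γ⁻¹) :=
    summable_of_hasFiniteSupport (hp_fin.subset (Function.support_mul_subset_left _ _))
  rw [ENNReal.ofReal_tsum_of_nonneg (fun γ => mul_nonneg (hp γ) (hf _)) hsum, markovOp]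
  simp only [ENNReal.ofReal_mul (hp _)]

theorem tsum_tsum_mul_le_of_superharmonic {p : Γ → ℝ} (hp₀ : ∀ γ, 0 ≤ p γ)
    (hp_inv : ∀ γ, p γ⁻¹ = p γ) (hp_fin : (Function.support p).Finite) {lam : ℝ} (hlam : 0 ≤ lam)
    {φ : Y → ℝ} (hφ : ∀ y, 0 < φ y) (hsuper : ∀ y, ∑' γ, p γ * φ (y <• γ⁻¹) ≤ lam * φ y)
    {ψ : Y → ℝ} (hψ : Memℓp ψ 2) (hψ₀ : ∀ y, 0 ≤ ψ y) :
    ∑' y, (∑' γ, p γ * ψ (y <• γ⁻¹)) * ψ y ≤ lam * ∑' y, ψ y ^ 2 := by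
  set P : Γ → ℝ≥0∞ := fun γ => ENNReal.ofReal (p γ)
  have hsuperP : ∀ y, markovOp P (fun y => ENNReal.ofReal (φ y)) y
      ≤ ENNReal.ofReal lam * ENNReal.ofReal (φ y) := fun y => by
    rw [markovOp_ofReal hp₀ hp_fin (fun y => (hφ y).le), ← ENNReal.ofReal_mul hlam]
    exact ENNReal.ofReal_le_ofReal (hsuper y)
  have hbarta := tsum_markovOp_mul_le (ψ := fun y => ENNReal.ofReal (ψ y))
    (fun γ => by simp only [P, hp_inv]) (fun y => by simpa using hφ y)
    (fun _ => ENNReal.ofReal_ne_top) hsuperP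
  simp only [← ENNReal.ofReal_pow (hψ₀ _)] at hbarta
  have hMψ : ∀ y, 0 ≤ ∑' γ, p γ * ψ (y <• γ⁻¹) := fun y =>
    tsum_nonneg fun γ => mul_nonneg (hp₀ γ) (hψ₀ _)
  calc ∑' y, (∑' γ, p γ * ψ (y <• γ⁻¹)) * ψ y
      = (∑' y, markovOp P (fun y => ENNReal.ofReal (ψ y)) y * ENNReal.ofReal (ψ y)).toReal := by
        rw [tsum_eq_toReal_tsum_ofReal fun y => mul_nonneg (hMψ y) (hψ₀ y)]
        simp only [P, markovOp_ofReal hp₀ hp_fin hψ₀, ENNReal.ofReal_mul (hMψ _)]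
    _ ≤ (ENNReal.ofReal lam * ∑' y, ENNReal.ofReal (ψ y ^ 2)).toReal :=
        ENNReal.toReal_mono (ENNReal.mul_ne_top ENNReal.ofReal_ne_top
          hψ.summable_sq.tsum_ofReal_ne_top) hbarta
    _ = lam * ∑' y, ψ y ^ 2 := by
        rw [ENNReal.toReal_mul, ENNReal.toReal_ofReal hlam,
          tsum_eq_toReal_tsum_ofReal fun y => sq_nonneg (ψ y)]

end Barta

theorem barta_inequality_general
    {Γ Y : Type} [Group Γ]
    (act : Y → Γ → Y)
    (hact_one : ∀ y : Y, act y 1 = y)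
    (hact_mul : ∀ (y : Y) (γ₁ γ₂ : Γ), act y (γ₁ * γ₂) = act (act y γ₁) γ₂)
    (p : Γ → ℝ) (hp0 : ∀ γ : Γ, 0 ≤ p γ)
    (hpsymm : ∀ γ : Γ, p γ⁻¹ = p γ)
    (hpfin : {γ : Γ | p γ ≠ 0}.Finite)
    (lam : ℝ) (hlam0 : 0 ≤ lam)
    (φ : Y → ℝ) (hφpos : ∀ y : Y, 0 < φ y)
    (hsuper : ∀ y : Y, ∑' γ : Γ, p γ * φ (act y γ⁻¹) ≤ lam * φ y) :
    ∀ ψ : Y → ℝ, Memℓp ψ 2 → (∀ y : Y, 0 ≤ ψ y) →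
      ∑' y : Y, (∑' γ : Γ, p γ * ψ (act y γ⁻¹)) * ψ y ≤ lam * ∑' y : Y, (ψ y) ^ 2 := by
  intro ψ hψ hψ₀
  let _ : MulAction Γᵐᵒᵖ Y :=
    { smul := fun γ y => act y γ.unop
      one_smul := hact_one
      mul_smul := fun γ₁ γ₂ y => hact_mul y γ₂.unop γ₁.unop }
  exact tsum_tsum_mul_le_of_superharmonic hp0 hpsymm hpfin hlam0 hφpos hsuper hψ hψ₀

/-- Barta's inequality. Let `Γ` act on the right on a countable
set `Y`, `p` a symmetric finitely supported probability measure on `Γ`, `M` the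
associated Markov operator, and `λ ∈ [0,1]`. If there is a strictly positive
`φ : Y → (0,∞)` with `Mφ ≤ λ·φ` pointwise, then the spectral radius of `M` on
`ℓ²(Y)` is at most `λ` (equivalently, `⟨Mψ,ψ⟩ ≤ λ‖ψ‖²` for every nonnegative
`ψ ∈ ℓ²(Y)`). -/
theorem barta_inequality
    {Γ Y : Type} [Group Γ] [Countable Γ] [Countable Y]
    (act : Y → Γ → Y)
    (hact_one : ∀ y : Y, act y 1 = y)
    (hact_mul : ∀ (y : Y) (γ₁ γ₂ : Γ), act y (γ₁ * γ₂) = act (act y γ₁) γ₂)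
    (p : Γ → ℝ) (hp0 : ∀ γ : Γ, 0 ≤ p γ) (hp1 : ∀ γ : Γ, p γ ≤ 1)
    (hpsymm : ∀ γ : Γ, p γ⁻¹ = p γ)
    (hpfin : {γ : Γ | p γ ≠ 0}.Finite) (hpsum : HasSum p 1)
    (lam : ℝ) (hlam0 : 0 ≤ lam) (hlam1 : lam ≤ 1)
    (φ : Y → ℝ) (hφpos : ∀ y : Y, 0 < φ y)
    (hsuper : ∀ y : Y, ∑' γ : Γ, p γ * φ (act y γ⁻¹) ≤ lam * φ y) :
    ∀ ψ : Y → ℝ, Memℓp ψ 2 → (∀ y : Y, 0 ≤ ψ y) →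
      ∑' y : Y, (∑' γ : Γ, p γ * ψ (act y γ⁻¹)) * ψ y ≤ lam * ∑' y : Y, (ψ y) ^ 2 :=
  barta_inequality_general act hact_one hact_mul p hp0 hpsymm hpfin lam hlam0 φ hφpos hsuper

end SPR
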